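/- Let n1, n2, n3, n4, m be nonnegative integers with n1 = n2 and m < n1; let q = max(n1, n2, n3, n4, m) and let Q be the q×q shift matrix over 𝔽₂. Then there exist q×q matrices G_A, G_B over 𝔽₂ such that, with G_S = Q^{q−n3} G_A Q^{q−n1} + Q^{q−n4} G_B Q^{q−n2} and G_M = Q^{q−n3} G_A Q^{q−m} + Q^{q−n4} G_B Q^{q−m}, one has G_M = 0 and rank(G_S) − dim(range(G_S) ∩ range(G_M)) = min(n1 − m, max(n3, n4)). -/

import Mathlib

/-- The `q × q` lower shift matrix over `𝔽₂`: entry `(i, j)` is `1` iff `i = j + 1`. -/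
def shiftQ (q : ℕ) : Matrix (Fin q) (Fin q) (ZMod 2) :=
  Matrix.of fun i j => if (i : ℕ) = (j : ℕ) + 1 then 1 else 0

/-- Source-to-destination transfer matrix
`G_S = Q^(q-n3) G_A Q^(q-n1) + Q^(q-n4) G_B Q^(q-n2)`. -/
def GSmat (q n1 n2 n3 n4 : ℕ) (GA GB : Matrix (Fin q) (Fin q) (ZMod 2)) :
    Matrix (Fin q) (Fin q) (ZMod 2) :=
  shiftQ q ^ (q - n3) * GA * shiftQ q ^ (q - n1) +
    shiftQ q ^ (q - n4) * GB * shiftQ q ^ (q - n2)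

/-- Interference transfer matrix
`G_M = Q^(q-n3) G_A Q^(q-m) + Q^(q-n4) G_B Q^(q-m)`. -/
def GMmat (q n3 n4 m : ℕ) (GA GB : Matrix (Fin q) (Fin q) (ZMod 2)) :
    Matrix (Fin q) (Fin q) (ZMod 2) :=
  shiftQ q ^ (q - n3) * GA * shiftQ q ^ (q - m) +
    shiftQ q ^ (q - n4) * GB * shiftQ q ^ (q - m)

/-- The achievable rate `rank G_S - dim (range G_S ∩ range G_M)` of a linear scheme. -/
noncomputable def linRate (q : ℕ) (GS GM : Matrix (Fin q) (Fin q) (ZMod 2)) : ℕ :=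
  GS.rank - Module.finrank (ZMod 2)
    ↥(LinearMap.range GS.mulVecLin ⊓ LinearMap.range GM.mulVecLin)

/-!
Write `P_r` for the projection onto the first `r` coordinates. Then `(Qᵏ)ᵀ Qᵏ = P_(q-k)` and
`P_r Qᵏ = 0` for `r ≤ k`. Let one relay, of level `a ∈ {n3, n4}` the larger, use the code
`G = P_r (Q^(q-n1))ᵀ` with `r = min (n1 - m) a`, and silence the other. Then
`G_S = Q^(q-a) P_r`, of rank `r` because `(Q^(q-a))ᵀ` undoes `Q^(q-a)` on the range of `P_r`,
while `G_M = Q^(q-a) P_r Q^(n1-m) = 0` because `r ≤ n1 - m`; with `G_M = 0` the rate is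
`rank G_S`.
-/

open Matrix

lemma shiftQ_pow_apply (q k : ℕ) (i j : Fin q) :
    (shiftQ q ^ k) i j = if (i : ℕ) = j + k then 1 else 0 := by
  induction k generalizing i j with
  | zero => simp [one_apply, Fin.ext_iff]
  | succ k ih =>
    rw [pow_succ, mul_apply]
    simp only [ih]
    simp only [shiftQ, of_apply, mul_ite, mul_one, mul_zero]
    rw [Fin.sum_univ_eq_sum_range
        (fun l => if l = j + 1 then if (i : ℕ) = l + k then 1 else 0 else 0), Finset.sum_ite_eq']
    simp only [Finset.mem_range]
    have := i.isLt
    split_ifs <;> first | rfl | omega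

def prefixProj (q r : ℕ) : Matrix (Fin q) (Fin q) (ZMod 2) :=
  diagonal fun i => if (i : ℕ) < r then 1 else 0

lemma prefixProj_mul_prefixProj (q r s : ℕ) :
    prefixProj q r * prefixProj q s = prefixProj q (min r s) := by
  rw [prefixProj, prefixProj, prefixProj, diagonal_mul_diagonal]
  congr 1
  ext i
  split_ifs <;> simp <;> omega

lemma prefixProj_mul_shiftQ_pow_eq_zero {q r k : ℕ} (h : r ≤ k) :
    prefixProj q r * shiftQ q ^ k = 0 := by
  ext i j
  rw [prefixProj, diagonal_mul, shiftQ_pow_apply, Matrix.zero_apply]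
  split_ifs <;> simp; omega

lemma shiftQ_pow_transpose_mul_self (q k : ℕ) :
    (shiftQ q ^ k)ᵀ * shiftQ q ^ k = prefixProj q (q - k) := by
  ext i j
  simp only [mul_apply, transpose_apply, shiftQ_pow_apply, prefixProj, diagonal_apply, ite_mul,
    one_mul, zero_mul]
  rw [Fin.sum_univ_eq_sum_range (fun l => if l = i + k then if l = j + k then 1 else 0 else 0),
    Finset.sum_ite_eq']
  simp only [Finset.mem_range, Fin.ext_iff]
  split_ifs <;> first | rfl | (exfalso; omega)

lemma rank_prefixProj {q r : ℕ} (h : r ≤ q) : (prefixProj q r).rank = r := by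
  simp only [prefixProj, rank_diagonal, ne_eq, ite_eq_right_iff, one_ne_zero, imp_false, not_not]
  rw [Fintype.card_subtype, Fin.card_filter_val_lt, min_eq_right h]

lemma rank_shiftQ_pow_mul_prefixProj {q a r : ℕ} (hr : r ≤ a) (ha : a ≤ q) :
    (shiftQ q ^ (q - a) * prefixProj q r).rank = r := by
  refine le_antisymm ((rank_mul_le_right _ _).trans (rank_prefixProj (hr.trans ha)).le) ?_
  calc r = (prefixProj q r).rank := (rank_prefixProj (hr.trans ha)).symm
    _ = ((shiftQ q ^ (q - a))ᵀ * (shiftQ q ^ (q - a) * prefixProj q r)).rank := by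
      rw [← Matrix.mul_assoc, shiftQ_pow_transpose_mul_self, Nat.sub_sub_self ha,
        prefixProj_mul_prefixProj, min_eq_right hr]
    _ ≤ _ := rank_mul_le_right _ _

lemma exists_relay_matrix {q a b c : ℕ} (ha : a ≤ q) (hb : b ≤ q) (hcb : c ≤ b) :
    ∃ G : Matrix (Fin q) (Fin q) (ZMod 2),
      shiftQ q ^ (q - a) * G * shiftQ q ^ (q - c) = 0 ∧
      (shiftQ q ^ (q - a) * G * shiftQ q ^ (q - b)).rank = min (b - c) a := by
  set r := min (b - c) a
  have hcancel :
      prefixProj q r * (shiftQ q ^ (q - b))ᵀ * shiftQ q ^ (q - b) = prefixProj q r := by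
    rw [Matrix.mul_assoc, shiftQ_pow_transpose_mul_self, Nat.sub_sub_self hb,
      prefixProj_mul_prefixProj, min_eq_left (by omega)]
  refine ⟨prefixProj q r * (shiftQ q ^ (q - b))ᵀ, ?_, ?_⟩
  · rw [show q - c = (q - b) + (b - c) by omega, pow_add, ← Matrix.mul_assoc,
      Matrix.mul_assoc (shiftQ q ^ (q - a)), hcancel, Matrix.mul_assoc,
      prefixProj_mul_shiftQ_pow_eq_zero (min_le_left _ _), Matrix.mul_zero]
  · rw [Matrix.mul_assoc (shiftQ q ^ (q - a)), hcancel,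
      rank_shiftQ_pow_mul_prefixProj (min_le_right _ _) ha]

lemma linRate_zero_right (q : ℕ) (GS : Matrix (Fin q) (Fin q) (ZMod 2)) :
    linRate q GS 0 = GS.rank := by
  rw [linRate, mulVecLin_zero, LinearMap.range_zero, inf_bot_eq, finrank_bot, Nat.sub_zero]

/-- Case `n1 = n2`, `m < n1`: the upper bound is achievable with `G_M = 0`. -/
theorem rate_achievable_case6
    (n1 n2 n3 n4 m q : ℕ) (hq : q = max n1 (max n2 (max n3 (max n4 m))))
    (h12 : n1 = n2) (hm : m < n1) :
    ∃ GA GB : Matrix (Fin q) (Fin q) (ZMod 2),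
      GMmat q n3 n4 m GA GB = 0 ∧
      linRate q (GSmat q n1 n2 n3 n4 GA GB) (GMmat q n3 n4 m GA GB)
        = min (n1 - m) (max n3 n4) := by
  subst h12
  have hn1 : n1 ≤ q := by omega
  rcases le_total n4 n3 with h43 | h34
  · obtain ⟨G, hM, hS⟩ := exists_relay_matrix (a := n3) (by omega) hn1 hm.le
    have hGM : GMmat q n3 n4 m G 0 = 0 := by simpa [GMmat] using hM
    refine ⟨G, 0, hGM, ?_⟩
    rw [hGM, linRate_zero_right, GSmat]
    simpa [max_eq_left h43] using hS
  · obtain ⟨G, hM, hS⟩ := exists_relay_matrix (a := n4) (by omega) hn1 hm.le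
    have hGM : GMmat q n3 n4 m 0 G = 0 := by simpa [GMmat] using hM
    refine ⟨0, G, hGM, ?_⟩
    rw [hGM, linRate_zero_right, GSmat]
    simpa [max_eq_right h34] using hS
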